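/- arXiv:1106.2971 — 4 statements merged into one kernel-verified Lean document; each statement's English description precedes it below -/
import Mathlib

section
/- For 1 < β < 2 and all τ in the open unit disk of ℂ, one has |1 + τ|^β ≤ 1 + |τ|^β + β · Re(τ). -/
theorem abs_one_add_rpow_le (β : ℝ) (hβ1 : 1 < β) (hβ2 : β < 2)
    (τ : ℂ) (hτ : ‖τ‖ < 1) :
    ‖1 + τ‖ ^ β ≤ 1 + ‖τ‖ ^ β + β * τ.re := by
  set r := ‖τ‖ with hr
  have hr0 : 0 ≤ r := norm_nonneg τ
  have hsq : ‖1 + τ‖ ^ (2:ℕ) = 1 + (2 * τ.re + r ^ (2:ℕ)) := by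
    rw [Complex.sq_norm, Complex.normSq_add]
    rw [← Complex.sq_norm τ, ← hr]
    simp [Complex.normSq_one]
    ring
  have habs : ‖1 + τ‖ ^ β = (1 + (2 * τ.re + r ^ (2:ℕ))) ^ (β/2) := by
    rw [← hsq, ← Real.rpow_natCast ‖1+τ‖ 2,
      ← Real.rpow_mul (norm_nonneg _)]
    congr 1; ring
  have hre : -r ≤ τ.re := neg_abs_le τ.re |>.trans' (by
    simp only [neg_le_neg_iff]
    exact Complex.abs_re_le_norm τ)
  have hs : -1 ≤ 2 * τ.re + r ^ (2:ℕ) := by nlinarith [Complex.abs_re_le_norm τ, abs_le.mp (le_refl |τ.re|)]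
  have hbern : (1 + (2 * τ.re + r ^ (2:ℕ))) ^ (β/2) ≤ 1 + (β/2) * (2 * τ.re + r ^ (2:ℕ)) :=
    rpow_one_add_le_one_add_mul_self hs (by linarith) (by linarith)
  have hkey : (β/2) * r ^ (2:ℕ) ≤ r ^ β := by
    rcases eq_or_lt_of_le hr0 with h0 | h0
    · rw [← h0]
      rw [Real.zero_rpow (by linarith)]
      norm_num
    · have h1 : r ^ (2:ℝ) ≤ r ^ β :=
        Real.rpow_le_rpow_of_exponent_ge h0 hτ.le (by linarith)
      have h2 : r ^ (2:ℝ) = r ^ (2:ℕ) := by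
        rw [show (2:ℝ) = ((2:ℕ):ℝ) by norm_num, Real.rpow_natCast]
      have h3 : (β/2) * r ^ (2:ℕ) ≤ r ^ (2:ℕ) :=
        mul_le_of_le_one_left (pow_nonneg hr0 2) (by linarith)
      calc (β/2) * r ^ (2:ℕ) ≤ r ^ (2:ℕ) := h3
        _ = r ^ (2:ℝ) := h2.symm
        _ ≤ r ^ β := h1
  calc ‖1 + τ‖ ^ β = (1 + (2 * τ.re + r ^ (2:ℕ))) ^ (β/2) := habs
    _ ≤ 1 + (β/2) * (2 * τ.re + r ^ (2:ℕ)) := hbern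
    _ = 1 + (β/2) * r ^ (2:ℕ) + β * τ.re := by ring
    _ ≤ 1 + r ^ β + β * τ.re := by linarith
end

section
/- For 1 < β < 2 and all complex numbers ξ, η, one has |ξ - η|^β ≤ |ξ|^β + |η|^β - β · min(|ξ|^{β-2}, |η|^{β-2}) · Re(η̄ ξ), with the convention that when ξ = 0 or η = 0 the last term is interpreted as 0. -/
open Real

lemma rpow_tangent_le {p s t : ℝ} (hp0 : 0 < p) (hp1 : p ≤ 1) (hs : 0 < s) (ht : 0 ≤ t) :
    t ^ p ≤ s ^ p + p * s ^ (p - 1) * (t - s) := by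
  have hx : -1 ≤ (t - s) / s := by
    rw [le_div_iff₀ hs]
    nlinarith
  have hB := rpow_one_add_le_one_add_mul_self hx hp0.le hp1
  have h1 : 1 + (t - s) / s = t / s := by field_simp; ring
  rw [h1, Real.div_rpow ht hs.le, div_le_iff₀ (Real.rpow_pos_of_pos hs p)] at hB
  have hsp : s ^ (p - 1) = s ^ p / s := by
    rw [Real.rpow_sub hs, Real.rpow_one]
  calc t ^ p ≤ (1 + p * ((t - s) / s)) * s ^ p := hB
    _ = s ^ p + p * (s ^ p / s) * (t - s) := by field_simp
    _ = s ^ p + p * s ^ (p - 1) * (t - s) := by rw [hsp]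

theorem abs_sub_rpow_le_homogenized (β : ℝ) (hβ1 : 1 < β) (hβ2 : β < 2) (ξ η : ℂ) :
    ‖ξ - η‖ ^ β ≤
      ‖ξ‖ ^ β + ‖η‖ ^ β -
        β * min (‖ξ‖ ^ (β - 2)) (‖η‖ ^ (β - 2)) *
          ((starRingEnd ℂ) η * ξ).re := by
  have hβ0 : 0 < β := by linarith
  rcases eq_or_ne ξ 0 with rfl | hξ
  · simp [norm_neg, Real.zero_rpow hβ0.ne']
  rcases eq_or_ne η 0 with rfl | hη
  · simp [Real.zero_rpow hβ0.ne']
  set a := ‖ξ‖ with ha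
  set b := ‖η‖ with hb
  have ha0 : 0 < a := norm_pos_iff.mpr hξ
  have hb0 : 0 < b := norm_pos_iff.mpr hη
  set M := max a b with hM
  set m := min a b with hm
  have hM0 : 0 < M := lt_max_of_lt_left ha0
  have hm0 : 0 < m := lt_min ha0 hb0
  have hmM : m ≤ M := min_le_max
  set R := ((starRingEnd ℂ) η * ξ).re with hR
  -- the min of the rpow's is M ^ (β - 2)
  have hmin : min (a ^ (β - 2)) (b ^ (β - 2)) = M ^ (β - 2) := by
    rcases le_total a b with hab | hab
    · rw [hM, max_eq_right hab, min_eq_right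
        (Real.rpow_le_rpow_of_nonpos ha0 hab (by linarith))]
    · rw [hM, max_eq_left hab, min_eq_left
        (Real.rpow_le_rpow_of_nonpos hb0 hab (by linarith))]
  -- |ξ - η|² = a² + b² - 2R
  have hsq : ‖ξ - η‖ ^ (2 : ℝ) = a ^ 2 + b ^ 2 - 2 * R := by
    rw [Real.rpow_two, ha, hb, Complex.sq_norm, Complex.sq_norm, Complex.sq_norm,
      Complex.normSq_sub, hR]
    rw [mul_comm ξ ((starRingEnd ℂ) η)]
  -- tangent line bound at s = M²
  have key := rpow_tangent_le (p := β / 2) (s := M ^ (2:ℝ))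
      (t := ‖ξ - η‖ ^ (2:ℝ)) (by linarith) (by linarith)
      (Real.rpow_pos_of_pos hM0 2) (Real.rpow_nonneg (norm_nonneg _) 2)
  have e1 : (‖ξ - η‖ ^ (2:ℝ)) ^ (β / 2) = ‖ξ - η‖ ^ β := by
    rw [← Real.rpow_mul (norm_nonneg _)]; congr 1; ring
  have e2 : (M ^ (2:ℝ)) ^ (β / 2) = M ^ β := by
    rw [← Real.rpow_mul hM0.le]; congr 1; ring
  have e3 : (M ^ (2:ℝ)) ^ (β / 2 - 1) = M ^ (β - 2) := by
    rw [← Real.rpow_mul hM0.le]; congr 1; ring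
  have e4 : ‖ξ - η‖ ^ (2:ℝ) - M ^ (2:ℝ) = m ^ 2 - 2 * R := by
    rw [hsq, Real.rpow_two]
    rcases le_total a b with hab | hab
    · rw [hM, max_eq_right hab, hm, min_eq_left hab]; ring
    · rw [hM, max_eq_left hab, hm, min_eq_right hab]; ring
  rw [e1, e2, e3, e4] at key
  -- (β/2) * M^(β-2) * m² ≤ m^β
  have h1 : β / 2 * M ^ (β - 2) * m ^ 2 ≤ m ^ β := by
    have hMm : M ^ (β - 2) ≤ m ^ (β - 2) :=
      Real.rpow_le_rpow_of_nonpos hm0 hmM (by linarith)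
    have hmβ : m ^ β = m ^ (β - 2) * m ^ 2 := by
      rw [← Real.rpow_two, ← Real.rpow_add hm0]; congr 1; ring
    rw [hmβ]
    have hb2 : β / 2 ≤ 1 := by linarith
    nlinarith [mul_le_mul_of_nonneg_right hMm (sq_nonneg m),
      mul_nonneg (Real.rpow_pos_of_pos hM0 (β - 2)).le (sq_nonneg m), sq_nonneg m]
  -- M^β + m^β = a^β + b^β
  have h2 : M ^ β + m ^ β = a ^ β + b ^ β := by
    rcases le_total a b with hab | hab
    · rw [hM, max_eq_right hab, hm, min_eq_left hab]; ring
    · rw [hM, max_eq_left hab, hm, min_eq_right hab]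
  have expand : M ^ β + β / 2 * M ^ (β - 2) * (m ^ 2 - 2 * R)
      = M ^ β + β / 2 * M ^ (β - 2) * m ^ 2 - β * M ^ (β - 2) * R := by ring
  rw [hmin]
  rw [expand] at key
  linarith
end

section
/- Let μ be a finite positive Borel measure on ℂ with compact support (or with finite moments so that all integrals below converge). Then for 0 < β ≤ 2, ∫∫ (|ξ|^β + |η|^β - |ξ-η|^β) dμ(ξ) dμ(η) ≥ 0. -/
open MeasureTheory Set Real

lemma aux_gmeas (β : ℝ) : Measurable (fun s : ℝ => (1 - Real.exp (-s)) * s ^ (-1 - β/2)) := by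
  have h1 : Measurable (fun s : ℝ => s ^ (-1 - β/2)) := by measurability
  exact (measurable_const.sub (Real.measurable_exp.comp measurable_neg)).mul h1

lemma aux_exp_le_one {s : ℝ} (hs : 0 ≤ s) : Real.exp (-s) ≤ 1 :=
  Real.exp_le_one_iff.2 (by linarith)

lemma aux_gI {β : ℝ} (hβ0 : 0 < β) (hβ2 : β < 2) :
    IntegrableOn (fun s : ℝ => (1 - Real.exp (-s)) * s ^ (-1 - β/2)) (Ioi (0:ℝ)) := by
  have hU : Ioc (0:ℝ) 1 ∪ Ioi 1 = Ioi 0 := Ioc_union_Ioi_eq_Ioi zero_le_one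
  rw [← hU]
  refine IntegrableOn.union ?_ ?_
  · have hdom : IntegrableOn (fun s : ℝ => s ^ (-β/2)) (Ioc (0:ℝ) 1) := by
      have := intervalIntegral.intervalIntegrable_rpow' (a := 0) (b := 1)
        (r := -β/2) (by linarith)
      rwa [intervalIntegrable_iff, uIoc_of_le zero_le_one] at this
    refine hdom.mono' (aux_gmeas β).aestronglyMeasurable ?_
    filter_upwards [ae_restrict_mem measurableSet_Ioc] with s hs
    have hs0 : 0 < s := hs.1
    have h1 : 1 - Real.exp (-s) ≤ s := by nlinarith [Real.add_one_le_exp (-s)]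
    have h2 : 0 ≤ 1 - Real.exp (-s) := by linarith [aux_exp_le_one hs0.le]
    have h3 : (0:ℝ) < s ^ (-1 - β/2) := Real.rpow_pos_of_pos hs0 _
    rw [Real.norm_eq_abs, abs_of_nonneg (by positivity)]
    calc (1 - Real.exp (-s)) * s ^ (-1 - β/2) ≤ s * s ^ (-1 - β/2) := by nlinarith
    _ = s ^ (-β/2) := by
        rw [mul_comm, ← Real.rpow_add_one hs0.ne' (-1-β/2)]; ring_nf
  · have hdom : IntegrableOn (fun s : ℝ => s ^ (-1 - β/2)) (Ioi (1:ℝ)) :=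
      integrableOn_Ioi_rpow_of_lt (by linarith) zero_lt_one
    refine hdom.mono' (aux_gmeas β).aestronglyMeasurable ?_
    filter_upwards [ae_restrict_mem measurableSet_Ioi] with s hs
    have hs0 : (0:ℝ) < s := lt_trans zero_lt_one hs
    have h2 : 0 ≤ 1 - Real.exp (-s) := by linarith [aux_exp_le_one hs0.le]
    have h3 : (0:ℝ) < s ^ (-1 - β/2) := Real.rpow_pos_of_pos hs0 _
    rw [Real.norm_eq_abs, abs_of_nonneg (by positivity)]
    nlinarith [Real.exp_pos (-s)]

lemma aux_int {β : ℝ} (hβ0 : 0 < β) (hβ2 : β < 2) (r : ℝ) :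
    IntegrableOn (fun t : ℝ => (1 - Real.exp (-(t * r^2))) * t ^ (-1 - β/2)) (Ioi (0:ℝ)) := by
  rcases eq_or_ne r 0 with h | h
  · have h0 : (fun t : ℝ => (1 - Real.exp (-(t * r^2))) * t ^ (-1 - β/2)) = fun _ => (0:ℝ) := by
      funext t; simp [h]
    rw [h0]; exact integrableOn_zero
  · have hb : 0 < r^2 := by positivity
    have h0 : IntegrableOn
        (fun t : ℝ => (1 - Real.exp (-(r^2 * t))) * (r^2 * t) ^ (-1 - β/2)) (Ioi (0:ℝ)) := by
      have := (integrableOn_Ioi_comp_mul_left_iff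
        (fun s : ℝ => (1 - Real.exp (-s)) * s ^ (-1 - β/2)) 0 hb).2
        (by simpa using aux_gI hβ0 hβ2)
      simpa using this
    have h1 : IntegrableOn
        (fun t : ℝ => ((r^2) ^ (-(-1 - β/2))) *
          ((1 - Real.exp (-(r^2 * t))) * (r^2 * t) ^ (-1 - β/2))) (Ioi (0:ℝ)) :=
      h0.const_mul ((r^2) ^ (-(-1 - β/2)))
    refine IntegrableOn.congr_fun h1 (fun t ht => ?_) measurableSet_Ioi
    have hsplit : (r^2 * t) ^ (-1 - β/2) = (r^2) ^ (-1 - β/2) * t ^ (-1 - β/2) :=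
      Real.mul_rpow hb.le (le_of_lt ht)
    have hbc : (r^2 : ℝ) ^ (-1 - β/2) ≠ 0 := (Real.rpow_pos_of_pos hb _).ne'
    rw [Real.rpow_neg hb.le, hsplit, mul_comm t (r^2)]
    field_simp

lemma aux_scale {β : ℝ} (hβ0 : 0 < β) (hβ2 : β < 2) {r : ℝ} (hr : 0 ≤ r) :
    ∫ t in Ioi (0:ℝ), (1 - Real.exp (-(t * r^2))) * t ^ (-1 - β/2) =
      r ^ β * ∫ s in Ioi (0:ℝ), (1 - Real.exp (-s)) * s ^ (-1 - β/2) := by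
  rcases eq_or_lt_of_le hr with h | h
  · subst h
    simp [Real.zero_rpow hβ0.ne']
  · have hb : 0 < r^2 := by positivity
    have key := integral_comp_mul_left_Ioi
      (fun s : ℝ => (1 - Real.exp (-s)) * s ^ (-1 - β/2)) 0 hb
    rw [mul_zero] at key
    have step1 : ∫ t in Ioi (0:ℝ), (1 - Real.exp (-(t * r^2))) * t ^ (-1 - β/2)
        = ∫ t in Ioi (0:ℝ), ((r^2) ^ (-(-1 - β/2))) *
            ((1 - Real.exp (-(r^2 * t))) * (r^2 * t) ^ (-1 - β/2)) := by
      refine setIntegral_congr_fun measurableSet_Ioi (fun t ht => ?_)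
      have hsplit : (r^2 * t) ^ (-1 - β/2) = (r^2) ^ (-1 - β/2) * t ^ (-1 - β/2) :=
        Real.mul_rpow hb.le (le_of_lt ht)
      have hbc : (r^2 : ℝ) ^ (-1 - β/2) ≠ 0 := (Real.rpow_pos_of_pos hb _).ne'
      rw [Real.rpow_neg hb.le, hsplit, mul_comm t (r^2)]
      field_simp
    rw [step1, integral_const_mul, key, smul_eq_mul, ← mul_assoc]
    congr 1
    have h2 : ((r^2:ℝ)) ^ (-(-1 - β/2)) * (r^2)⁻¹ = (r^2) ^ (β/2) := by
      rw [← Real.rpow_neg_one (r^2), ← Real.rpow_add hb]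
      norm_num
    rw [h2, ← Real.rpow_natCast r 2, ← Real.rpow_mul hr]
    congr 1
    push_cast
    ring

lemma aux_Ipos {β : ℝ} (hβ0 : 0 < β) (hβ2 : β < 2) :
    0 < ∫ s in Ioi (0:ℝ), (1 - Real.exp (-s)) * s ^ (-1 - β/2) := by
  set c : ℝ := (1 - Real.exp (-1)) * 2 ^ (-1 - β/2) with hc
  have hcpos : 0 < c := by
    have h1 : Real.exp (-1) < 1 := by
      calc Real.exp (-1) < Real.exp 0 := Real.exp_lt_exp.2 (by norm_num)
      _ = 1 := Real.exp_zero
    have h2 : (0:ℝ) < (2:ℝ) ^ (-1 - β/2) := Real.rpow_pos_of_pos (by norm_num) _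
    exact mul_pos (by linarith) h2
  have hsub : Ioc (1:ℝ) 2 ⊆ Ioi 0 := fun x hx => lt_trans zero_lt_one hx.1
  have hint12 : IntegrableOn (fun s : ℝ => (1 - Real.exp (-s)) * s ^ (-1 - β/2))
      (Ioc (1:ℝ) 2) := (aux_gI hβ0 hβ2).mono_set hsub
  have hlow : c * (volume (Ioc (1:ℝ) 2)).toReal
      ≤ ∫ s in Ioc (1:ℝ) 2, (1 - Real.exp (-s)) * s ^ (-1 - β/2) := by
    refine setIntegral_ge_of_const_le_real measurableSet_Ioc (by simp) (fun s hs => ?_) hint12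
    have hs1 : (1:ℝ) < s := hs.1
    have hs0 : (0:ℝ) < s := lt_trans zero_lt_one hs1
    have e1 : Real.exp (-s) ≤ Real.exp (-1) := Real.exp_le_exp.2 (by linarith)
    have e2 : (2:ℝ) ^ (-1 - β/2) ≤ s ^ (-1 - β/2) :=
      Real.rpow_le_rpow_of_nonpos hs0 hs.2 (by linarith)
    have e3 : (0:ℝ) ≤ 1 - Real.exp (-1) := by
      linarith [aux_exp_le_one (le_of_lt zero_lt_one)]
    exact mul_le_mul (by linarith) e2 (Real.rpow_pos_of_pos (by norm_num) _).le (by linarith)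
  have hvol : (volume (Ioc (1:ℝ) 2)).toReal = 1 := by
    simp [Real.volume_Ioc]; norm_num
  have hmono : ∫ s in Ioc (1:ℝ) 2, (1 - Real.exp (-s)) * s ^ (-1 - β/2)
      ≤ ∫ s in Ioi (0:ℝ), (1 - Real.exp (-s)) * s ^ (-1 - β/2) := by
    refine setIntegral_mono_set (aux_gI hβ0 hβ2) ?_ hsub.eventuallyLE
    filter_upwards [ae_restrict_mem measurableSet_Ioi] with s hs
    exact mul_nonneg (by linarith [aux_exp_le_one (le_of_lt hs)]) (Real.rpow_nonneg (le_of_lt hs) _)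
  rw [hvol] at hlow
  linarith

noncomputable def auxφ (t : ℝ) (k l : ℕ) (z : ℂ) : ℝ :=
  Real.exp (-(t * (‖z‖)^2)) * z.re ^ k * z.im ^ l

noncomputable def auxW (t : ℝ) (n : ℕ) (p : ℂ × ℂ) : ℝ :=
  Real.exp (-(t * (‖p.1‖)^2)) * Real.exp (-(t * (‖p.2‖)^2)) *
    ((2*t*(p.1.re * p.2.re + p.1.im * p.2.im))^(n+1) / (Nat.factorial (n+1) : ℝ))

lemma aux_exp_cont (t : ℝ) : Continuous (fun z : ℂ => Real.exp (-(t * (‖z‖)^2))) :=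
  Real.continuous_exp.comp (Continuous.neg (continuous_const.mul (continuous_norm.pow 2)))

lemma auxφ_cont (t : ℝ) (k l : ℕ) : Continuous (auxφ t k l) :=
  ((aux_exp_cont t).mul (Complex.continuous_re.pow k)).mul (Complex.continuous_im.pow l)

lemma auxD_cont : Continuous (fun p : ℂ × ℂ => p.1.re * p.2.re + p.1.im * p.2.im) :=
  ((Complex.continuous_re.comp continuous_fst).mul
    (Complex.continuous_re.comp continuous_snd)).add
  ((Complex.continuous_im.comp continuous_fst).mul
    (Complex.continuous_im.comp continuous_snd))

lemma auxW_cont (t : ℝ) (n : ℕ) : Continuous (auxW t n) :=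
  (((aux_exp_cont t).comp continuous_fst).mul ((aux_exp_cont t).comp continuous_snd)).mul
    (((continuous_const.mul auxD_cont).pow (n+1)).div_const _)

lemma aux_ae_pair (μ : Measure ℂ) [IsFiniteMeasure μ] {K : Set ℂ} (hK0 : μ Kᶜ = 0) :
    ∀ᵐ p : ℂ × ℂ ∂(μ.prod μ), p.1 ∈ K ∧ p.2 ∈ K := by
  rw [ae_iff]
  have h1 : (μ.prod μ) (Kᶜ ×ˢ (univ : Set ℂ)) = 0 := by
    rw [Measure.prod_prod, hK0, zero_mul]
  have h2 : (μ.prod μ) ((univ : Set ℂ) ×ˢ Kᶜ) = 0 := by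
    rw [Measure.prod_prod, hK0, mul_zero]
  refine measure_mono_null (fun p hp => ?_) (measure_union_null h1 h2)
  simp only [mem_setOf_eq, not_and_or] at hp
  rcases hp with h | h
  · exact Set.mem_union_left _ (Set.mem_prod.2 ⟨h, mem_univ _⟩)
  · exact Set.mem_union_right _ (Set.mem_prod.2 ⟨mem_univ _, h⟩)

lemma aux_int_pair (μ : Measure ℂ) [IsFiniteMeasure μ] {K : Set ℂ} (hK0 : μ Kᶜ = 0)
    {f : ℂ × ℂ → ℝ} (hf : AEStronglyMeasurable f (μ.prod μ)) {M : ℝ}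
    (hM : ∀ p : ℂ × ℂ, p.1 ∈ K → p.2 ∈ K → ‖f p‖ ≤ M) : Integrable f (μ.prod μ) := by
  refine Integrable.mono' (integrable_const M) hf ?_
  filter_upwards [aux_ae_pair μ hK0] with p hp using hM p hp.1 hp.2

lemma aux_int_single (μ : Measure ℂ) [IsFiniteMeasure μ] {K : Set ℂ} (hK0 : μ Kᶜ = 0)
    {f : ℂ → ℝ} (hf : AEStronglyMeasurable f μ) {M : ℝ}
    (hM : ∀ z ∈ K, ‖f z‖ ≤ M) : Integrable f μ := by
  refine Integrable.mono' (integrable_const M) hf ?_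
  have hae : ∀ᵐ z ∂μ, z ∈ K := by
    rw [ae_iff]
    exact hK0
  filter_upwards [hae] with z hz using hM z hz

lemma auxW_tsum (t : ℝ) (p : ℂ × ℂ) :
    (Real.exp (-(t * (‖p.1‖)^2)) * Real.exp (-(t * (‖p.2‖)^2))) *
      (Real.exp (2*t*(p.1.re * p.2.re + p.1.im * p.2.im)) - 1) = ∑' n : ℕ, auxW t n p := by
  set x := 2*t*(p.1.re * p.2.re + p.1.im * p.2.im) with hx
  have hexp : Real.exp x = ∑' n : ℕ, x^n / (Nat.factorial n : ℝ) := by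
    rw [Real.exp_eq_exp_ℝ, NormedSpace.exp_eq_tsum_div]
  have hsum : Summable (fun n : ℕ => x^n / (Nat.factorial n : ℝ)) :=
    Real.summable_pow_div_factorial x
  have hshift : Real.exp x - 1 = ∑' n : ℕ, x^(n+1) / (Nat.factorial (n+1) : ℝ) := by
    rw [hexp, Summable.tsum_eq_zero_add hsum]
    simp [Nat.factorial]
  rw [hshift, ← tsum_mul_left]
  exact tsum_congr fun n => by simp only [auxW, hx]

lemma aux_exp_le_one' {t : ℝ} (ht : 0 ≤ t) (z : ℂ) :
    Real.exp (-(t * (‖z‖)^2)) ≤ 1 := by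
  rw [Real.exp_le_one_iff]
  have : (0:ℝ) ≤ t * (‖z‖)^2 := by positivity
  linarith

lemma auxφ_bound {t : ℝ} (ht : 0 ≤ t) {R : ℝ} (k l : ℕ)
    {z : ℂ} (hz : ‖z‖ ≤ R) :
    ‖auxφ t k l z‖ ≤ (max 1 R)^k * (max 1 R)^l := by
  have h0 : (0:ℝ) < Real.exp (-(t * (‖z‖)^2)) := Real.exp_pos _
  have h1 : Real.exp (-(t * (‖z‖)^2)) ≤ 1 := aux_exp_le_one' ht z
  have hre : |z.re| ≤ max 1 R := le_trans (Complex.abs_re_le_norm z)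
    (le_trans hz (le_max_right 1 R))
  have him : |z.im| ≤ max 1 R := le_trans (Complex.abs_im_le_norm z)
    (le_trans hz (le_max_right 1 R))
  have hM1 : (0:ℝ) ≤ max 1 R := le_trans zero_le_one (le_max_left 1 R)
  have hrek : |z.re|^k ≤ (max 1 R)^k := pow_le_pow_left₀ (abs_nonneg _) hre k
  have himl : |z.im|^l ≤ (max 1 R)^l := pow_le_pow_left₀ (abs_nonneg _) him l
  calc ‖auxφ t k l z‖
      = Real.exp (-(t * (‖z‖)^2)) * |z.re|^k * |z.im|^l := by
        rw [Real.norm_eq_abs, auxφ, abs_mul, abs_mul, abs_of_pos h0, abs_pow, abs_pow]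
    _ ≤ 1 * (max 1 R)^k * (max 1 R)^l := by
        apply mul_le_mul (mul_le_mul h1 hrek (by positivity) zero_le_one) himl
          (by positivity) (by positivity)
    _ = (max 1 R)^k * (max 1 R)^l := by ring

lemma auxW_int_nonneg (μ : Measure ℂ) [IsFiniteMeasure μ] {K : Set ℂ} (hK0 : μ Kᶜ = 0)
    {R : ℝ} (hR : ∀ z ∈ K, ‖z‖ ≤ R) {t : ℝ} (ht : 0 ≤ t) (n : ℕ) :
    0 ≤ ∫ p, auxW t n p ∂(μ.prod μ) := by
  have hexpand : ∀ p : ℂ × ℂ, auxW t n p = (2*t)^(n+1) / (Nat.factorial (n+1) : ℝ) *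
      ∑ k ∈ Finset.range (n+2),
        (auxφ t k (n+1-k) p.1 * auxφ t k (n+1-k) p.2) * (Nat.choose (n+1) k : ℝ) := by
    intro p
    rw [auxW, mul_pow, add_pow, Finset.mul_sum, Finset.sum_div, Finset.mul_sum, Finset.mul_sum]
    refine Finset.sum_congr rfl (fun k hk => ?_)
    simp only [auxφ]
    rw [mul_pow (p.1.re) (p.2.re), mul_pow (p.1.im) (p.2.im)]
    ring
  have hterm_int : ∀ k : ℕ, Integrable
      (fun p : ℂ × ℂ => (auxφ t k (n+1-k) p.1 * auxφ t k (n+1-k) p.2) * (Nat.choose (n+1) k : ℝ))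
      (μ.prod μ) := by
    intro k
    refine aux_int_pair μ hK0 ?_
      (M := ((max 1 R)^k * (max 1 R)^(n+1-k))^2 * (Nat.choose (n+1) k : ℝ)) ?_
    · exact ((((auxφ_cont t k (n+1-k)).comp continuous_fst).mul
        ((auxφ_cont t k (n+1-k)).comp continuous_snd)).mul continuous_const).aestronglyMeasurable
    · intro p h1 h2
      have b1 := auxφ_bound ht k (n+1-k) (hR _ h1)
      have b2 := auxφ_bound ht k (n+1-k) (hR _ h2)
      rw [norm_mul, norm_mul]
      have hc : ‖(Nat.choose (n+1) k : ℝ)‖ = (Nat.choose (n+1) k : ℝ) := by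
        rw [Real.norm_eq_abs, abs_of_nonneg (Nat.cast_nonneg _)]
      rw [hc, pow_two]
      refine mul_le_mul_of_nonneg_right ?_ (Nat.cast_nonneg _)
      exact mul_le_mul b1 b2 (norm_nonneg _) (by positivity)
  have hval : ∫ p, auxW t n p ∂(μ.prod μ) = (2*t)^(n+1) / (Nat.factorial (n+1) : ℝ) *
      ∑ k ∈ Finset.range (n+2),
        ((∫ z, auxφ t k (n+1-k) z ∂μ)^2 * (Nat.choose (n+1) k : ℝ)) := by
    rw [show (fun p : ℂ × ℂ => auxW t n p) = _ from funext hexpand, integral_const_mul]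
    congr 1
    rw [integral_finset_sum _ (fun k _ => hterm_int k)]
    refine Finset.sum_congr rfl fun k hk => ?_
    rw [integral_mul_const, integral_prod_mul, pow_two]
  rw [hval]
  apply mul_nonneg (by positivity)
  exact Finset.sum_nonneg fun k _ => mul_nonneg (sq_nonneg _) (Nat.cast_nonneg _)

lemma aux_F_nonneg (μ : Measure ℂ) [IsFiniteMeasure μ] {K : Set ℂ}
    (hK0 : μ Kᶜ = 0) {R : ℝ} (hR : ∀ z ∈ K, ‖z‖ ≤ R) {t : ℝ} (ht : 0 ≤ t) :
    0 ≤ ∫ p : ℂ × ℂ,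
      ((1 - Real.exp (-(t * (‖p.1‖)^2))) + (1 - Real.exp (-(t * (‖p.2‖)^2)))
        - (1 - Real.exp (-(t * (‖p.1 - p.2‖)^2)))) ∂(μ.prod μ) := by
  have hrw : ∀ p : ℂ × ℂ,
      (1 - Real.exp (-(t * (‖p.1‖)^2))) + (1 - Real.exp (-(t * (‖p.2‖)^2)))
        - (1 - Real.exp (-(t * (‖p.1 - p.2‖)^2)))
      = (1 - Real.exp (-(t * (‖p.1‖)^2))) * (1 - Real.exp (-(t * (‖p.2‖)^2)))
        + (Real.exp (-(t * (‖p.1‖)^2)) * Real.exp (-(t * (‖p.2‖)^2)))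
          * (Real.exp (2*t*(p.1.re * p.2.re + p.1.im * p.2.im)) - 1) := by
    intro p
    have h3 : Real.exp (-(t * (‖p.1 - p.2‖)^2))
        = Real.exp (-(t * (‖p.1‖)^2)) * Real.exp (-(t * (‖p.2‖)^2))
          * Real.exp (2*t*(p.1.re * p.2.re + p.1.im * p.2.im)) := by
      rw [← Real.exp_add, ← Real.exp_add]
      congr 1
      rw [Complex.sq_norm, Complex.sq_norm, Complex.sq_norm]
      simp only [Complex.normSq_apply, Complex.sub_re, Complex.sub_im]
      ring
    rw [h3]; ring
  rw [show (fun p : ℂ × ℂ =>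
      (1 - Real.exp (-(t * (‖p.1‖)^2))) + (1 - Real.exp (-(t * (‖p.2‖)^2)))
        - (1 - Real.exp (-(t * (‖p.1 - p.2‖)^2)))) = _ from funext hrw]
  set B : ℝ := 4 * t * (max 1 R)^2 with hB
  have hB0 : 0 ≤ B := by positivity
  have hDbound : ∀ p : ℂ × ℂ, p.1 ∈ K → p.2 ∈ K →
      |2*t*(p.1.re * p.2.re + p.1.im * p.2.im)| ≤ B := by
    intro p h1 h2
    have hre1 : |p.1.re| ≤ max 1 R := le_trans (Complex.abs_re_le_norm _)
      (le_trans (hR _ h1) (le_max_right 1 R))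
    have him1 : |p.1.im| ≤ max 1 R := le_trans (Complex.abs_im_le_norm _)
      (le_trans (hR _ h1) (le_max_right 1 R))
    have hre2 : |p.2.re| ≤ max 1 R := le_trans (Complex.abs_re_le_norm _)
      (le_trans (hR _ h2) (le_max_right 1 R))
    have him2 : |p.2.im| ≤ max 1 R := le_trans (Complex.abs_im_le_norm _)
      (le_trans (hR _ h2) (le_max_right 1 R))
    have hM1 : (0:ℝ) ≤ max 1 R := le_trans zero_le_one (le_max_left 1 R)
    have hD : |p.1.re * p.2.re + p.1.im * p.2.im| ≤ 2 * (max 1 R)^2 := by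
      calc |p.1.re * p.2.re + p.1.im * p.2.im|
          ≤ |p.1.re * p.2.re| + |p.1.im * p.2.im| := abs_add_le _ _
        _ = |p.1.re| * |p.2.re| + |p.1.im| * |p.2.im| := by rw [abs_mul, abs_mul]
        _ ≤ (max 1 R) * (max 1 R) + (max 1 R) * (max 1 R) := by
            gcongr <;> first | exact abs_nonneg _ | assumption
        _ = 2 * (max 1 R)^2 := by ring
    calc |2*t*(p.1.re * p.2.re + p.1.im * p.2.im)|
        = 2*t*|p.1.re * p.2.re + p.1.im * p.2.im| := by
          rw [abs_mul, abs_of_nonneg (by positivity : (0:ℝ) ≤ 2*t)]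
      _ ≤ 2*t*(2 * (max 1 R)^2) := by
          exact mul_le_mul_of_nonneg_left hD (by positivity)
      _ = B := by rw [hB]; ring
  -- integrability of the two pieces
  have hint1 : Integrable (fun p : ℂ × ℂ =>
      (1 - Real.exp (-(t * (‖p.1‖)^2))) * (1 - Real.exp (-(t * (‖p.2‖)^2))))
      (μ.prod μ) := by
    refine aux_int_pair μ hK0 ?_ (M := 1) ?_
    · exact (((continuous_const.sub (aux_exp_cont t)).comp continuous_fst).mul
        ((continuous_const.sub (aux_exp_cont t)).comp continuous_snd)).aestronglyMeasurable
    · intro p _ _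
      have e1 := aux_exp_le_one' ht p.1
      have e2 := aux_exp_le_one' ht p.2
      have e3 := (Real.exp_pos (-(t * (‖p.1‖)^2))).le
      have e4 := (Real.exp_pos (-(t * (‖p.2‖)^2))).le
      rw [Real.norm_eq_abs, abs_mul]
      calc |1 - Real.exp (-(t * (‖p.1‖)^2))| * |1 - Real.exp (-(t * (‖p.2‖)^2))|
          ≤ 1 * 1 := by
            apply mul_le_mul (abs_le.2 ⟨by linarith, by linarith⟩)
              (abs_le.2 ⟨by linarith, by linarith⟩) (abs_nonneg _) zero_le_one
        _ = 1 := by ring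
  have hint2 : Integrable (fun p : ℂ × ℂ =>
      (Real.exp (-(t * (‖p.1‖)^2)) * Real.exp (-(t * (‖p.2‖)^2)))
        * (Real.exp (2*t*(p.1.re * p.2.re + p.1.im * p.2.im)) - 1)) (μ.prod μ) := by
    refine aux_int_pair μ hK0 ?_ (M := Real.exp B + 1) ?_
    · exact ((((aux_exp_cont t).comp continuous_fst).mul
        ((aux_exp_cont t).comp continuous_snd)).mul
        ((Real.continuous_exp.comp (continuous_const.mul auxD_cont)).sub
          continuous_const)).aestronglyMeasurable
    · intro p h1 h2
      have e1 := aux_exp_le_one' ht p.1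
      have e2 := aux_exp_le_one' ht p.2
      have e3 := (Real.exp_pos (-(t * (‖p.1‖)^2))).le
      have e4 := (Real.exp_pos (-(t * (‖p.2‖)^2))).le
      have hx := hDbound p h1 h2
      have hxB : Real.exp (2*t*(p.1.re * p.2.re + p.1.im * p.2.im)) ≤ Real.exp B :=
        Real.exp_le_exp.2 (le_trans (le_abs_self _) hx)
      have hxp := (Real.exp_pos (2*t*(p.1.re * p.2.re + p.1.im * p.2.im))).le
      rw [Real.norm_eq_abs, abs_mul]
      calc |Real.exp (-(t * (‖p.1‖)^2)) * Real.exp (-(t * (‖p.2‖)^2))| *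
            |Real.exp (2*t*(p.1.re * p.2.re + p.1.im * p.2.im)) - 1|
          ≤ 1 * (Real.exp B + 1) := by
            apply mul_le_mul
            · rw [abs_mul]
              calc |Real.exp (-(t * (‖p.1‖)^2))| * |Real.exp (-(t * (‖p.2‖)^2))|
                  = Real.exp (-(t * (‖p.1‖)^2)) * Real.exp (-(t * (‖p.2‖)^2)) := by
                    rw [abs_of_nonneg e3, abs_of_nonneg e4]
                _ ≤ 1 * 1 := mul_le_mul e1 e2 e4 zero_le_one
                _ = 1 := by ring
            · exact abs_le.2 ⟨by linarith [Real.exp_pos B], by linarith⟩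
            · exact abs_nonneg _
            · exact zero_le_one
        _ = Real.exp B + 1 := by ring
  rw [integral_add hint1 hint2]
  have hT1 : ∫ p : ℂ × ℂ,
      (1 - Real.exp (-(t * (‖p.1‖)^2))) * (1 - Real.exp (-(t * (‖p.2‖)^2)))
      ∂(μ.prod μ)
      = (∫ z, (1 - Real.exp (-(t * (‖z‖)^2))) ∂μ) *
        (∫ z, (1 - Real.exp (-(t * (‖z‖)^2))) ∂μ) :=
    integral_prod_mul (fun z => 1 - Real.exp (-(t * (‖z‖)^2)))
      (fun z => 1 - Real.exp (-(t * (‖z‖)^2)))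
  have hT2 : ∫ p : ℂ × ℂ,
      (Real.exp (-(t * (‖p.1‖)^2)) * Real.exp (-(t * (‖p.2‖)^2)))
        * (Real.exp (2*t*(p.1.re * p.2.re + p.1.im * p.2.im)) - 1) ∂(μ.prod μ)
      = ∑' n : ℕ, ∫ p, auxW t n p ∂(μ.prod μ) := by
    rw [show (fun p : ℂ × ℂ =>
        (Real.exp (-(t * (‖p.1‖)^2)) * Real.exp (-(t * (‖p.2‖)^2)))
          * (Real.exp (2*t*(p.1.re * p.2.re + p.1.im * p.2.im)) - 1))
        = fun p => ∑' n : ℕ, auxW t n p from funext (auxW_tsum t)]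
    refine integral_tsum (fun n => (auxW_cont t n).measurable.aestronglyMeasurable) ?_
    have hb : ∀ n : ℕ, ∫⁻ p, ‖auxW t n p‖₊ ∂(μ.prod μ)
        ≤ ENNReal.ofReal (B^(n+1) / (Nat.factorial (n+1) : ℝ)) * (μ.prod μ) univ := by
      intro n
      have hbd : ∀ᵐ p ∂(μ.prod μ),
          (‖auxW t n p‖₊ : ENNReal) ≤ ENNReal.ofReal (B^(n+1) / (Nat.factorial (n+1) : ℝ)) := by
        filter_upwards [aux_ae_pair μ hK0] with p hp
        rw [← enorm_eq_nnnorm, ← ofReal_norm_eq_enorm]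
        apply ENNReal.ofReal_le_ofReal
        have e1 := aux_exp_le_one' ht p.1
        have e2 := aux_exp_le_one' ht p.2
        have e3 := (Real.exp_pos (-(t * (‖p.1‖)^2))).le
        have e4 := (Real.exp_pos (-(t * (‖p.2‖)^2))).le
        have hx := hDbound p hp.1 hp.2
        calc ‖auxW t n p‖
            = Real.exp (-(t * (‖p.1‖)^2)) * Real.exp (-(t * (‖p.2‖)^2)) *
              (|2*t*(p.1.re * p.2.re + p.1.im * p.2.im)|^(n+1) / (Nat.factorial (n+1) : ℝ)) := by
              rw [Real.norm_eq_abs, auxW, abs_mul, abs_mul, abs_of_nonneg e3, abs_of_nonneg e4,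
                abs_div, abs_pow, Nat.abs_cast]
          _ ≤ 1 * 1 * (B^(n+1) / (Nat.factorial (n+1) : ℝ)) := by
              gcongr
          _ = B^(n+1) / (Nat.factorial (n+1) : ℝ) := by ring
      calc ∫⁻ p, ‖auxW t n p‖₊ ∂(μ.prod μ)
          ≤ ∫⁻ _, ENNReal.ofReal (B^(n+1) / (Nat.factorial (n+1) : ℝ)) ∂(μ.prod μ) :=
            lintegral_mono_ae hbd
        _ = ENNReal.ofReal (B^(n+1) / (Nat.factorial (n+1) : ℝ)) * (μ.prod μ) univ :=
            lintegral_const _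
    have hsum : Summable (fun n : ℕ => B^(n+1) / (Nat.factorial (n+1) : ℝ)) :=
      (summable_nat_add_iff 1).mpr (Real.summable_pow_div_factorial B)
    have hfin : (∑' n : ℕ, ENNReal.ofReal (B^(n+1) / (Nat.factorial (n+1) : ℝ))) *
        (μ.prod μ) univ ≠ ⊤ := by
      rw [← ENNReal.ofReal_tsum_of_nonneg (fun n => by positivity) hsum]
      exact ENNReal.mul_ne_top ENNReal.ofReal_ne_top (measure_ne_top _ _)
    exact ne_top_of_le_ne_top hfin (le_trans (ENNReal.tsum_le_tsum hb)
      (le_of_eq ENNReal.tsum_mul_right))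
  rw [hT1, hT2]
  have h1 : 0 ≤ (∫ z, (1 - Real.exp (-(t * (‖z‖)^2))) ∂μ) *
      (∫ z, (1 - Real.exp (-(t * (‖z‖)^2))) ∂μ) := mul_self_nonneg _
  have h2 : 0 ≤ ∑' n : ℕ, ∫ p, auxW t n p ∂(μ.prod μ) :=
    tsum_nonneg fun n => auxW_int_nonneg μ hK0 hR ht n
  linarith

set_option maxHeartbeats 2000000 in
theorem double_integral_rpow_kernel_nonneg
    (μ : Measure ℂ) [IsFiniteMeasure μ]
    (hK : ∃ K : Set ℂ, IsCompact K ∧ μ Kᶜ = 0)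
    (β : ℝ) (hβ0 : 0 < β) (hβ2 : β ≤ 2)
    (hint : Integrable
      (fun p : ℂ × ℂ =>
        ‖p.1‖ ^ β + ‖p.2‖ ^ β - ‖p.1 - p.2‖ ^ β)
      (μ.prod μ)) :
    0 ≤ ∫ p : ℂ × ℂ,
        (‖p.1‖ ^ β + ‖p.2‖ ^ β - ‖p.1 - p.2‖ ^ β)
      ∂(μ.prod μ) := by
  obtain ⟨K, hKc, hK0⟩ := hK
  obtain ⟨R0, hR0⟩ := hKc.isBounded.subset_closedBall 0
  have hR : ∀ z ∈ K, ‖z‖ ≤ max 1 R0 := by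
    intro z hz
    have h := hR0 hz
    rw [Metric.mem_closedBall, Complex.dist_eq, sub_zero] at h
    exact le_trans h (le_max_right 1 R0)
  set R' : ℝ := max 1 R0 with hR'def
  have hR'1 : (1:ℝ) ≤ R' := le_max_left 1 R0
  have hR'0 : (0:ℝ) ≤ R' := le_trans zero_le_one hR'1
  rcases lt_or_eq_of_le hβ2 with hb2 | hb2
  · -- case β < 2 : heat-kernel representation
    set I : ℝ := ∫ s in Ioi (0:ℝ), (1 - Real.exp (-s)) * s ^ (-1 - β/2) with hIdef
    have hIpos : 0 < I := aux_Ipos hβ0 hb2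
    have hIne : I ≠ 0 := ne_of_gt hIpos
    have hpt : ∀ p : ℂ × ℂ,
        (∫ t in Ioi (0:ℝ),
          ((1 - Real.exp (-(t * (‖p.1‖)^2)))
            + (1 - Real.exp (-(t * (‖p.2‖)^2)))
            - (1 - Real.exp (-(t * (‖p.1 - p.2‖)^2)))) * t ^ (-1 - β/2))
        = (‖p.1‖ ^ β + ‖p.2‖ ^ β - ‖p.1 - p.2‖ ^ β) * I := by
      intro p
      have h1 := aux_int hβ0 hb2 (‖p.1‖)
      have h2 := aux_int hβ0 hb2 (‖p.2‖)
      have h3 := aux_int hβ0 hb2 (‖p.1 - p.2‖)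
      have hcong : ∀ t : ℝ,
          ((1 - Real.exp (-(t * (‖p.1‖)^2)))
            + (1 - Real.exp (-(t * (‖p.2‖)^2)))
            - (1 - Real.exp (-(t * (‖p.1 - p.2‖)^2)))) * t ^ (-1 - β/2)
          = (1 - Real.exp (-(t * (‖p.1‖)^2))) * t ^ (-1 - β/2)
            + (1 - Real.exp (-(t * (‖p.2‖)^2))) * t ^ (-1 - β/2)
            - (1 - Real.exp (-(t * (‖p.1 - p.2‖)^2))) * t ^ (-1 - β/2) := by
        intro t; ring
      have h12 : Integrable (fun t : ℝ =>
          (1 - Real.exp (-(t * (‖p.1‖)^2))) * t ^ (-1 - β/2)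
          + (1 - Real.exp (-(t * (‖p.2‖)^2))) * t ^ (-1 - β/2))
          (volume.restrict (Ioi 0)) := h1.add h2
      rw [integral_congr_ae (Filter.Eventually.of_forall hcong), integral_sub h12 h3,
        integral_add h1 h2, aux_scale hβ0 hb2 (norm_nonneg _),
        aux_scale hβ0 hb2 (norm_nonneg _), aux_scale hβ0 hb2 (norm_nonneg _)]
      ring
    have hrw2 : (fun p : ℂ × ℂ =>
        ‖p.1‖ ^ β + ‖p.2‖ ^ β - ‖p.1 - p.2‖ ^ β)
        = fun p : ℂ × ℂ => I⁻¹ * ∫ t in Ioi (0:ℝ),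
          ((1 - Real.exp (-(t * (‖p.1‖)^2)))
            + (1 - Real.exp (-(t * (‖p.2‖)^2)))
            - (1 - Real.exp (-(t * (‖p.1 - p.2‖)^2)))) * t ^ (-1 - β/2) := by
      funext p
      rw [hpt p]
      field_simp
    rw [hrw2, integral_const_mul]
    refine mul_nonneg (inv_nonneg.2 hIpos.le) ?_
    -- Fubini
    have hrp : Measurable fun s : ℝ => s ^ (-1 - β/2) := by measurability
    have habs1 : Measurable fun q : (ℂ × ℂ) × ℝ =>
        Real.exp (-(q.2 * (‖q.1.1‖)^2)) :=
      Real.measurable_exp.comp (Measurable.neg (measurable_snd.mul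
        ((continuous_norm.measurable.comp measurable_fst.fst).pow_const 2)))
    have habs2 : Measurable fun q : (ℂ × ℂ) × ℝ =>
        Real.exp (-(q.2 * (‖q.1.2‖)^2)) :=
      Real.measurable_exp.comp (Measurable.neg (measurable_snd.mul
        ((continuous_norm.measurable.comp measurable_fst.snd).pow_const 2)))
    have habs3 : Measurable fun q : (ℂ × ℂ) × ℝ =>
        Real.exp (-(q.2 * (‖q.1.1 - q.1.2‖)^2)) :=
      Real.measurable_exp.comp (Measurable.neg (measurable_snd.mul
        ((continuous_norm.measurable.comp
          (measurable_fst.fst.sub measurable_fst.snd)).pow_const 2)))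
    have hmeasH : AEStronglyMeasurable
        (Function.uncurry (fun (p : ℂ × ℂ) (t : ℝ) =>
          ((1 - Real.exp (-(t * (‖p.1‖)^2)))
            + (1 - Real.exp (-(t * (‖p.2‖)^2)))
            - (1 - Real.exp (-(t * (‖p.1 - p.2‖)^2)))) * t ^ (-1 - β/2)))
        ((μ.prod μ).prod (volume.restrict (Ioi 0))) := by
      apply Measurable.aestronglyMeasurable
      exact (((measurable_const.sub habs1).add (measurable_const.sub habs2)).sub
        (measurable_const.sub habs3)).mul (hrp.comp measurable_snd)
    have hptint : ∀ p : ℂ × ℂ, Integrable (fun t : ℝ =>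
        ((1 - Real.exp (-(t * (‖p.1‖)^2)))
          + (1 - Real.exp (-(t * (‖p.2‖)^2)))
          - (1 - Real.exp (-(t * (‖p.1 - p.2‖)^2)))) * t ^ (-1 - β/2))
        (volume.restrict (Ioi 0)) := by
      intro p
      have h12 : Integrable (fun t : ℝ =>
          (1 - Real.exp (-(t * (‖p.1‖)^2))) * t ^ (-1 - β/2)
          + (1 - Real.exp (-(t * (‖p.2‖)^2))) * t ^ (-1 - β/2))
          (volume.restrict (Ioi 0)) :=
        (aux_int hβ0 hb2 (‖p.1‖)).add (aux_int hβ0 hb2 (‖p.2‖))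
      have h123 : Integrable (fun t : ℝ =>
          ((1 - Real.exp (-(t * (‖p.1‖)^2))) * t ^ (-1 - β/2)
          + (1 - Real.exp (-(t * (‖p.2‖)^2))) * t ^ (-1 - β/2))
          - (1 - Real.exp (-(t * (‖p.1 - p.2‖)^2))) * t ^ (-1 - β/2))
          (volume.restrict (Ioi 0)) := h12.sub (aux_int hβ0 hb2 (‖p.1 - p.2‖))
      exact h123.congr (Filter.Eventually.of_forall (fun t => by ring))
    have hintH : Integrable
        (Function.uncurry (fun (p : ℂ × ℂ) (t : ℝ) =>
          ((1 - Real.exp (-(t * (‖p.1‖)^2)))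
            + (1 - Real.exp (-(t * (‖p.2‖)^2)))
            - (1 - Real.exp (-(t * (‖p.1 - p.2‖)^2)))) * t ^ (-1 - β/2)))
        ((μ.prod μ).prod (volume.restrict (Ioi 0))) := by
      rw [integrable_prod_iff hmeasH]
      constructor
      · exact Filter.Eventually.of_forall hptint
      · refine aux_int_pair μ hK0 hmeasH.norm.integral_prod_right'
          (M := (R' ^ β + R' ^ β + (2*R') ^ β) * I) ?_
        intro p h1 h2
        have hr1 : ‖p.1‖ ≤ R' := hR _ h1
        have hr2 : ‖p.2‖ ≤ R' := hR _ h2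
        have hr3 : ‖p.1 - p.2‖ ≤ 2 * R' := by
          have := norm_sub_le_norm_sub_add_norm_sub p.1 0 p.2
          simp only [sub_zero, zero_sub, norm_neg] at this
          linarith
        have hA := aux_int hβ0 hb2 (‖p.1‖)
        have hB := aux_int hβ0 hb2 (‖p.2‖)
        have hC := aux_int hβ0 hb2 (‖p.1 - p.2‖)
        have hnorm_int := (hptint p).norm
        have hmono : ∫ t in Ioi (0:ℝ), ‖((1 - Real.exp (-(t * (‖p.1‖)^2)))
              + (1 - Real.exp (-(t * (‖p.2‖)^2)))
              - (1 - Real.exp (-(t * (‖p.1 - p.2‖)^2)))) * t ^ (-1 - β/2)‖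
            ≤ ∫ t in Ioi (0:ℝ),
              ((1 - Real.exp (-(t * (‖p.1‖)^2))) * t ^ (-1 - β/2)
              + (1 - Real.exp (-(t * (‖p.2‖)^2))) * t ^ (-1 - β/2)
              + (1 - Real.exp (-(t * (‖p.1 - p.2‖)^2))) * t ^ (-1 - β/2)) := by
          refine integral_mono_ae hnorm_int ((hA.add hB).add hC) ?_
          filter_upwards [ae_restrict_mem measurableSet_Ioi] with t ht
          have htp : (0:ℝ) ≤ t ^ (-1 - β/2) := Real.rpow_nonneg (le_of_lt ht) _
          have e1 : 0 ≤ 1 - Real.exp (-(t * (‖p.1‖)^2)) := by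
            have := aux_exp_le_one' (le_of_lt (mem_Ioi.1 ht)) p.1; linarith
          have e2 : 0 ≤ 1 - Real.exp (-(t * (‖p.2‖)^2)) := by
            have := aux_exp_le_one' (le_of_lt (mem_Ioi.1 ht)) p.2; linarith
          have e3 : 0 ≤ 1 - Real.exp (-(t * (‖p.1 - p.2‖)^2)) := by
            have := aux_exp_le_one' (le_of_lt (mem_Ioi.1 ht)) (p.1 - p.2); linarith
          have e3' : 1 - Real.exp (-(t * (‖p.1 - p.2‖)^2)) ≤ 1 := by
            have := (Real.exp_pos (-(t * (‖p.1 - p.2‖)^2))).le; linarith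
          rw [Real.norm_eq_abs, abs_mul, abs_of_nonneg htp]
          have habs : |(1 - Real.exp (-(t * (‖p.1‖)^2)))
              + (1 - Real.exp (-(t * (‖p.2‖)^2)))
              - (1 - Real.exp (-(t * (‖p.1 - p.2‖)^2)))|
              ≤ (1 - Real.exp (-(t * (‖p.1‖)^2)))
              + (1 - Real.exp (-(t * (‖p.2‖)^2)))
              + (1 - Real.exp (-(t * (‖p.1 - p.2‖)^2))) := by
            rw [abs_le]; constructor <;> nlinarith
          nlinarith
        have hval : ∫ t in Ioi (0:ℝ),
              ((1 - Real.exp (-(t * (‖p.1‖)^2))) * t ^ (-1 - β/2)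
              + (1 - Real.exp (-(t * (‖p.2‖)^2))) * t ^ (-1 - β/2)
              + (1 - Real.exp (-(t * (‖p.1 - p.2‖)^2))) * t ^ (-1 - β/2))
            = ‖p.1‖ ^ β * I + ‖p.2‖ ^ β * I
              + ‖p.1 - p.2‖ ^ β * I := by
          have hAB : Integrable (fun t : ℝ =>
              (1 - Real.exp (-(t * (‖p.1‖)^2))) * t ^ (-1 - β/2)
              + (1 - Real.exp (-(t * (‖p.2‖)^2))) * t ^ (-1 - β/2))
              (volume.restrict (Ioi 0)) := hA.add hB
          rw [integral_add hAB hC, integral_add hA hB,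
            aux_scale hβ0 hb2 (norm_nonneg _), aux_scale hβ0 hb2 (norm_nonneg _),
            aux_scale hβ0 hb2 (norm_nonneg _)]
        have hpow1 : ‖p.1‖ ^ β ≤ R' ^ β :=
          Real.rpow_le_rpow (norm_nonneg _) hr1 hβ0.le
        have hpow2 : ‖p.2‖ ^ β ≤ R' ^ β :=
          Real.rpow_le_rpow (norm_nonneg _) hr2 hβ0.le
        have hpow3 : ‖p.1 - p.2‖ ^ β ≤ (2*R') ^ β :=
          Real.rpow_le_rpow (norm_nonneg _) hr3 hβ0.le
        have hnn : 0 ≤ ∫ t in Ioi (0:ℝ), ‖((1 - Real.exp (-(t * (‖p.1‖)^2)))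
              + (1 - Real.exp (-(t * (‖p.2‖)^2)))
              - (1 - Real.exp (-(t * (‖p.1 - p.2‖)^2)))) * t ^ (-1 - β/2)‖ :=
          integral_nonneg (fun t => norm_nonneg _)
        simp only [Function.uncurry_apply_pair]
        rw [Real.norm_eq_abs, abs_of_nonneg hnn]
        rw [hval] at hmono
        have m1 : ‖p.1‖ ^ β * I ≤ R' ^ β * I :=
          mul_le_mul_of_nonneg_right hpow1 hIpos.le
        have m2 : ‖p.2‖ ^ β * I ≤ R' ^ β * I :=
          mul_le_mul_of_nonneg_right hpow2 hIpos.le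
        have m3 : ‖p.1 - p.2‖ ^ β * I ≤ (2*R') ^ β * I :=
          mul_le_mul_of_nonneg_right hpow3 hIpos.le
        nlinarith
    have hswap : ∫ p : ℂ × ℂ, (∫ t in Ioi (0:ℝ),
          ((1 - Real.exp (-(t * (‖p.1‖)^2)))
            + (1 - Real.exp (-(t * (‖p.2‖)^2)))
            - (1 - Real.exp (-(t * (‖p.1 - p.2‖)^2)))) * t ^ (-1 - β/2)) ∂(μ.prod μ)
        = ∫ t in Ioi (0:ℝ), (∫ p : ℂ × ℂ,
          ((1 - Real.exp (-(t * (‖p.1‖)^2)))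
            + (1 - Real.exp (-(t * (‖p.2‖)^2)))
            - (1 - Real.exp (-(t * (‖p.1 - p.2‖)^2)))) * t ^ (-1 - β/2) ∂(μ.prod μ)) :=
      integral_integral_swap hintH
    rw [hswap]
    refine setIntegral_nonneg measurableSet_Ioi (fun t ht => ?_)
    have hmr : ∫ p : ℂ × ℂ,
        ((1 - Real.exp (-(t * (‖p.1‖)^2)))
          + (1 - Real.exp (-(t * (‖p.2‖)^2)))
          - (1 - Real.exp (-(t * (‖p.1 - p.2‖)^2)))) * t ^ (-1 - β/2) ∂(μ.prod μ)
        = (∫ p : ℂ × ℂ,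
          ((1 - Real.exp (-(t * (‖p.1‖)^2)))
          + (1 - Real.exp (-(t * (‖p.2‖)^2)))
          - (1 - Real.exp (-(t * (‖p.1 - p.2‖)^2)))) ∂(μ.prod μ)) * t ^ (-1 - β/2) :=
      integral_mul_const _ _
    rw [hmr]
    exact mul_nonneg (aux_F_nonneg μ hK0 hR (le_of_lt ht))
      (Real.rpow_nonneg (le_of_lt ht) _)
  · -- case β = 2
    subst hb2
    have habs2 : ∀ z : ℂ, ‖z‖ ^ (2:ℝ) = z.re^2 + z.im^2 := by
      intro z
      rw [show (2:ℝ) = ((2:ℕ):ℝ) by norm_num, Real.rpow_natCast, Complex.sq_norm,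
        Complex.normSq_apply]
      ring
    have hrw : (fun p : ℂ × ℂ =>
        ‖p.1‖ ^ (2:ℝ) + ‖p.2‖ ^ (2:ℝ) - ‖p.1 - p.2‖ ^ (2:ℝ))
        = fun p : ℂ × ℂ => 2*(p.1.re*p.2.re) + 2*(p.1.im*p.2.im) := by
      funext p
      rw [habs2, habs2, habs2]
      simp only [Complex.sub_re, Complex.sub_im]
      ring
    rw [hrw]
    have hintre : Integrable (fun p : ℂ × ℂ => 2*(p.1.re*p.2.re)) (μ.prod μ) := by
      refine aux_int_pair μ hK0 ?_ (M := 2*(R'*R')) ?_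
      · exact (continuous_const.mul
          ((Complex.continuous_re.comp continuous_fst).mul
            (Complex.continuous_re.comp continuous_snd))).aestronglyMeasurable
      · intro p h1 h2
        have hre1 : |p.1.re| ≤ R' := le_trans (Complex.abs_re_le_norm _) (hR _ h1)
        have hre2 : |p.2.re| ≤ R' := le_trans (Complex.abs_re_le_norm _) (hR _ h2)
        rw [Real.norm_eq_abs, abs_mul, abs_mul, abs_of_nonneg (by norm_num : (0:ℝ) ≤ 2)]
        have := mul_le_mul hre1 hre2 (abs_nonneg _) hR'0
        linarith
    have hintim : Integrable (fun p : ℂ × ℂ => 2*(p.1.im*p.2.im)) (μ.prod μ) := by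
      refine aux_int_pair μ hK0 ?_ (M := 2*(R'*R')) ?_
      · exact (continuous_const.mul
          ((Complex.continuous_im.comp continuous_fst).mul
            (Complex.continuous_im.comp continuous_snd))).aestronglyMeasurable
      · intro p h1 h2
        have hre1 : |p.1.im| ≤ R' := le_trans (Complex.abs_im_le_norm _) (hR _ h1)
        have hre2 : |p.2.im| ≤ R' := le_trans (Complex.abs_im_le_norm _) (hR _ h2)
        rw [Real.norm_eq_abs, abs_mul, abs_mul, abs_of_nonneg (by norm_num : (0:ℝ) ≤ 2)]
        have := mul_le_mul hre1 hre2 (abs_nonneg _) hR'0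
        linarith
    rw [integral_add hintre hintim]
    have e1 : ∫ p : ℂ × ℂ, 2*(p.1.re*p.2.re) ∂(μ.prod μ)
        = 2 * ((∫ z : ℂ, z.re ∂μ) * (∫ z : ℂ, z.re ∂μ)) := by
      rw [integral_const_mul]
      congr 1
      exact integral_prod_mul (fun z : ℂ => z.re) (fun z : ℂ => z.re)
    have e2 : ∫ p : ℂ × ℂ, 2*(p.1.im*p.2.im) ∂(μ.prod μ)
        = 2 * ((∫ z : ℂ, z.im ∂μ) * (∫ z : ℂ, z.im ∂μ)) := by
      rw [integral_const_mul]
      congr 1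
      exact integral_prod_mul (fun z : ℂ => z.im) (fun z : ℂ => z.im)
    rw [e1, e2]
    nlinarith [mul_self_nonneg (∫ z : ℂ, z.re ∂μ), mul_self_nonneg (∫ z : ℂ, z.im ∂μ)]
end

section
/- For two disks of equal radius r > 0 in the plane whose centers are at distance d with 0 ≤ d ≤ 2r, the area of their intersection equals 2r² arccos(d/(2r)) - r d √(1 - d²/(4r²)). -/
open MeasureTheory Set Real intervalIntegral


lemma sqrtF_hasDerivAt (r : ℝ) (hr : 0 < r) (x : ℝ) (h1 : -r < x) (h2 : x < r) :
    HasDerivAt (fun x : ℝ => x * Real.sqrt (r^2 - x^2) / 2 + r^2 / 2 * Real.arcsin (x / r))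
      (Real.sqrt (r^2 - x^2)) x := by
  have hpos : 0 < r^2 - x^2 := by nlinarith
  set s := Real.sqrt (r^2 - x^2) with hs
  have hspos : 0 < s := Real.sqrt_pos.mpr hpos
  have hssq : s^2 = r^2 - x^2 := Real.sq_sqrt hpos.le
  have hd1 : HasDerivAt (fun x : ℝ => Real.sqrt (r^2 - x^2)) (-x / s) x := by
    have h := (Real.hasDerivAt_sqrt (ne_of_gt hpos)).comp x
      ((hasDerivAt_pow 2 x).const_sub (r^2))
    refine h.congr_deriv ?_
    field_simp [hspos.ne']
    ring
  have hd2 : HasDerivAt (fun x : ℝ => x * Real.sqrt (r^2 - x^2) / 2)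
      ((1 * s + x * (-x / s)) / 2) x :=
    ((hasDerivAt_id x).mul hd1).div_const 2
  have hx1 : x / r ≠ -1 := by
    intro h; rw [div_eq_iff hr.ne'] at h; nlinarith
  have hx2 : x / r ≠ 1 := by
    intro h; rw [div_eq_iff hr.ne'] at h; nlinarith
  have hsub : Real.sqrt (1 - (x / r)^2) = s / r := by
    rw [show (1 : ℝ) - (x / r)^2 = (r^2 - x^2) / r^2 by field_simp,
      Real.sqrt_div hpos.le, Real.sqrt_sq hr.le]
  have hd3 : HasDerivAt (fun x : ℝ => r^2 / 2 * Real.arcsin (x / r))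
      (r^2 / 2 * (1 / Real.sqrt (1 - (x / r)^2) * (1 / r))) x := by
    exact (((Real.hasDerivAt_arcsin hx1 hx2).comp x
      ((hasDerivAt_id x).div_const r))).const_mul (r^2 / 2)
  refine (hd2.add hd3).congr_deriv (Eq.symm ?_)
  rw [hsub]
  field_simp
  linear_combination hssq

lemma integral_sqrt_aux (r : ℝ) (hr : 0 < r) (a : ℝ) (ha : -r ≤ a) (ha' : a ≤ r) :
    ∫ x in a..r, Real.sqrt (r^2 - x^2)
      = π * r^2 / 4 - (a * Real.sqrt (r^2 - a^2) / 2 + r^2 / 2 * Real.arcsin (a / r)) := by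
  have hcont : ContinuousOn (fun x : ℝ => x * Real.sqrt (r^2 - x^2) / 2
      + r^2 / 2 * Real.arcsin (x / r)) (Icc a r) := by
    apply Continuous.continuousOn
    exact ((continuous_id.mul (Real.continuous_sqrt.comp (by continuity))).div_const 2).add
      (continuous_const.mul (Real.continuous_arcsin.comp (continuous_id.div_const r)))
  have hint : IntervalIntegrable (fun x : ℝ => Real.sqrt (r^2 - x^2)) volume a r := by
    apply Continuous.intervalIntegrable
    exact Real.continuous_sqrt.comp (by continuity)
  have key := intervalIntegral.integral_eq_sub_of_hasDeriv_right_of_le ha' hcont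
    (fun x hx => (sqrtF_hasDerivAt r hr x (lt_of_le_of_lt ha hx.1) hx.2).hasDerivWithinAt) hint
  rw [key]
  rw [show r^2 - r^2 = 0 by ring, Real.sqrt_zero, div_self hr.ne', Real.arcsin_one]
  ring


lemma vol_rot (r : ℝ) (c : ℂ) :
    volume (Metric.ball (0:ℂ) r ∩ Metric.ball c r) =
      volume (Metric.ball (0:ℂ) r ∩ Metric.ball ((‖c‖ : ℝ) : ℂ) r) := by
  rcases eq_or_ne c 0 with rfl | hc
  · simp
  · have hd0 : (0:ℝ) < ‖c‖ := norm_pos_iff.mpr hc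
    set d : ℝ := ‖c‖ with hd
    have hu : ‖c / (d:ℂ)‖ = 1 := by
      rw [norm_div, Complex.norm_real, Real.norm_eq_abs, abs_of_pos hd0, div_self hd0.ne']
    set u : Circle := ⟨c / d, by
      simp only [Submonoid.unitSphere, Submonoid.mem_mk, Subsemigroup.mem_mk,
        mem_sphere_zero_iff_norm, hu]⟩ with hu'
    have hmp : MeasurePreserving (rotation u) volume volume :=
      LinearIsometryEquiv.measurePreserving (rotation u)
    have hmeas : MeasurableSet (Metric.ball (0:ℂ) r ∩ Metric.ball c r) :=
      measurableSet_ball.inter measurableSet_ball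
    rw [← hmp.measure_preimage hmeas.nullMeasurableSet]
    congr 1
    ext z
    have habs : ‖(u : ℂ)‖ = 1 := hu
    have hcu : (u : ℂ) * d = c := by
      show c / (d:ℂ) * d = c
      exact div_mul_cancel₀ c (Complex.ofReal_ne_zero.mpr hd0.ne')
    simp only [mem_inter_iff, mem_preimage, Metric.mem_ball, Complex.dist_eq, rotation_apply]
    constructor
    · rintro ⟨h1, h2⟩
      constructor
      · rwa [sub_zero, norm_mul, habs, one_mul, ← sub_zero z] at h1
      · calc ‖z - d‖ = ‖(u:ℂ) * z - c‖ := by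
              rw [← hcu, ← mul_sub, norm_mul, habs, one_mul]
          _ < r := h2
    · rintro ⟨h1, h2⟩
      constructor
      · rw [sub_zero, norm_mul, habs, one_mul]
        rwa [sub_zero] at h1
      · calc ‖(u:ℂ) * z - c‖ = ‖z - d‖ := by
              rw [← hcu, ← mul_sub, norm_mul, habs, one_mul]
          _ < r := h2

lemma lens_eq (r d : ℝ) (hr : 0 < r) :
    Metric.ball (0:ℂ) r ∩ Metric.ball ((d:ℝ):ℂ) r =
      Complex.measurableEquivRealProd ⁻¹'
        regionBetween (fun x => -Real.sqrt (r^2 - max (x^2) ((x-d)^2)))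
          (fun x => Real.sqrt (r^2 - max (x^2) ((x-d)^2))) (Ioo (d-r) r) := by
  ext z
  have habs : ∀ w : ℂ, (‖w‖ < r ↔ w.re^2 + w.im^2 < r^2) := fun w => by
    rw [Complex.norm_def, Real.sqrt_lt' hr, Complex.normSq_apply,
      show w.re*w.re = w.re^2 from (sq w.re).symm, show w.im*w.im = w.im^2 from (sq w.im).symm]
  simp only [mem_inter_iff, Metric.mem_ball, Complex.dist_eq, sub_zero, habs,
    mem_preimage, regionBetween, mem_setOf_eq, mem_Ioo,
    show (Complex.measurableEquivRealProd z) = (z.re, z.im) from rfl,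
    Complex.sub_re, Complex.sub_im, Complex.ofReal_re, Complex.ofReal_im, sub_zero]
  set x := z.re
  set y := z.im
  have key : ∀ v : ℝ, |v| < Real.sqrt (r^2 - max (x^2) ((x-d)^2)) ↔
      v^2 < r^2 - max (x^2) ((x-d)^2) := fun v => by
    rw [Real.lt_sqrt (abs_nonneg v), sq_abs]
  constructor
  · rintro ⟨h1, h2⟩
    have hM : max (x^2) ((x-d)^2) < r^2 - y^2 := max_lt (by nlinarith) (by nlinarith)
    have hy : y^2 < r^2 - max (x^2) ((x-d)^2) := by linarith
    have hMr : max (x^2) ((x-d)^2) < r^2 := by nlinarith [sq_nonneg y]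
    have hx2 : x^2 < r^2 := lt_of_le_of_lt (le_max_left _ _) hMr
    have hxd2 : (x-d)^2 < r^2 := lt_of_le_of_lt (le_max_right _ _) hMr
    have hyy := abs_lt.mp ((key y).mpr hy)
    exact ⟨⟨by nlinarith, by nlinarith⟩, hyy.1, hyy.2⟩
  · rintro ⟨⟨hx1, hx2⟩, hy1, hy2⟩
    have hy : y^2 < r^2 - max (x^2) ((x-d)^2) := (key y).mp (abs_lt.mpr ⟨hy1, hy2⟩)
    exact ⟨by nlinarith [le_max_left (x^2) ((x-d)^2)],
      by nlinarith [le_max_right (x^2) ((x-d)^2)]⟩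

lemma area_lens (r : ℝ) (hr : 0 < r) (d : ℝ) (hd0 : 0 ≤ d) (hd2 : d ≤ 2*r) :
    (volume (Metric.ball (0:ℂ) r ∩ Metric.ball ((d:ℝ):ℂ) r)).toReal =
      2 * r ^ 2 * Real.arccos (d / (2 * r)) - r * d * Real.sqrt (1 - d ^ 2 / (4 * r ^ 2)) := by
  have hfc : Continuous (fun x : ℝ => Real.sqrt (r^2 - max (x^2) ((x-d)^2))) :=
    Real.continuous_sqrt.comp (by continuity)
  set f : ℝ → ℝ := fun x => Real.sqrt (r^2 - max (x^2) ((x-d)^2)) with hf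
  have hint : IntegrableOn f (Ioo (d-r) r) volume :=
    ((hfc.continuousOn).integrableOn_Icc).mono_set Ioo_subset_Icc_self
  have hmeas : MeasurableSet (regionBetween (fun x => -(f x)) f (Ioo (d-r) r)) :=
    measurableSet_regionBetween (hfc.neg.measurable) hfc.measurable measurableSet_Ioo
  have hreg := volume_regionBetween_eq_integral hint.neg hint measurableSet_Ioo
    (fun x _ => neg_le_self (Real.sqrt_nonneg _))
  rw [show (-f) = (fun x => -f x) from rfl] at hreg
  rw [lens_eq r d hr,
    Complex.volume_preserving_equiv_real_prod.measure_preimage hmeas.nullMeasurableSet,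
    Measure.volume_eq_prod, hreg]
  have h2f : ∫ y in Ioo (d-r) r, (f - fun x => -f x) y = ∫ y in Ioo (d-r) r, 2 * f y := by
    apply setIntegral_congr_fun measurableSet_Ioo
    intro y _
    simp only [Pi.sub_apply, sub_neg_eq_add, two_mul]
  have hdr : d - r ≤ r := by linarith
  have hd2r : d/2 ≤ r := by linarith
  have hdrd2 : d - r ≤ d/2 := by linarith
  rw [h2f, ENNReal.toReal_ofReal (setIntegral_nonneg measurableSet_Ioo
    (fun x _ => by positivity))]
  rw [← integral_Ioc_eq_integral_Ioo, ← intervalIntegral.integral_of_le hdr]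
  have hi1 : IntervalIntegrable (fun x => 2 * f x) volume (d-r) (d/2) :=
    (continuous_const.mul hfc).intervalIntegrable _ _
  have hi2 : IntervalIntegrable (fun x => 2 * f x) volume (d/2) r :=
    (continuous_const.mul hfc).intervalIntegrable _ _
  rw [show (fun x => 2 * f x) = (fun x => 2 * f x) from rfl] at hi1 hi2
  rw [← intervalIntegral.integral_add_adjacent_intervals hi1 hi2]
  have e2 : ∫ x in (d/2)..r, 2 * f x = ∫ x in (d/2)..r, 2 * Real.sqrt (r^2 - x^2) := by
    apply intervalIntegral.integral_congr
    intro x hx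
    rw [uIcc_of_le hd2r] at hx
    have hmax : max (x^2) ((x-d)^2) = x^2 :=
      max_eq_left (by nlinarith [mul_nonneg hd0 (by linarith [hx.1] : (0:ℝ) ≤ 2*x - d)])
    simp only [hf, hmax]
  have e1 : ∫ x in (d-r)..(d/2), 2 * f x
      = ∫ x in (d/2)..r, 2 * Real.sqrt (r^2 - x^2) := by
    have : ∫ x in (d-r)..(d/2), 2 * f x
        = ∫ x in (d-r)..(d/2), (fun t => 2 * Real.sqrt (r^2 - t^2)) (x - d) := by
      apply intervalIntegral.integral_congr
      intro x hx
      rw [uIcc_of_le hdrd2] at hx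
      have hmax : max (x^2) ((x-d)^2) = (x-d)^2 :=
        max_eq_right (by nlinarith [mul_nonneg hd0 (by linarith [hx.2] : (0:ℝ) ≤ d - 2*x)])
      simp only [hf, hmax]
    rw [this, intervalIntegral.integral_comp_sub_right (fun t => 2 * Real.sqrt (r^2 - t^2)) d,
      show d - r - d = -r by ring, show d/2 - d = -(d/2) by ring,
      ← intervalIntegral.integral_comp_neg (fun t => 2 * Real.sqrt (r^2 - t^2))]
    simp only [neg_sq]
  rw [e1, e2, ← two_mul, intervalIntegral.integral_const_mul,
    integral_sqrt_aux r hr (d/2) (by linarith) hd2r]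
  have h3 : Real.sqrt (r^2 - (d/2)^2) = r * Real.sqrt (1 - d^2/(4*r^2)) := by
    rw [show r^2 - (d/2)^2 = r^2 * (1 - d^2/(4*r^2)) by field_simp; ring,
      Real.sqrt_mul (sq_nonneg r), Real.sqrt_sq hr.le]
  rw [h3, Real.arccos_eq_pi_div_two_sub_arcsin, show d/2/r = d/(2*r) from div_div d 2 r]
  ring

theorem area_inter_two_disks (r : ℝ) (hr : 0 < r) (c : ℂ) (d : ℝ)
    (hd : d = ‖c‖) (hd2 : d ≤ 2 * r) :
    (volume (Metric.ball (0 : ℂ) r ∩ Metric.ball c r)).toReal =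
      2 * r ^ 2 * Real.arccos (d / (2 * r)) -
        r * d * Real.sqrt (1 - d ^ 2 / (4 * r ^ 2)) := by
  subst hd
  rw [vol_rot r c]
  exact area_lens r hr ‖c‖ (norm_nonneg _) hd2
end
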